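/- If G is a connected finite simple graph of order n ≥ 3, then b_dR(G) ≤ δ(G) + 2Δ(G) − 3, where δ(G) and Δ(G) denote the minimum and maximum degree of G. -/

import Mathlib

/-- A double Roman dominating function (DRDF) on a graph `G`: a function
`f : V → ℕ` taking values in `{0,1,2,3}` such that every vertex assigned `0`
has a neighbor assigned `3` or two distinct neighbors assigned `2`, and every
vertex assigned `1` has a neighbor assigned at least `2`. -/
def IsDRDF {V : Type*} (G : SimpleGraph V) (f : V → ℕ) : Prop :=
  (∀ v, f v ≤ 3) ∧
  (∀ v, f v = 0 →
    (∃ w, G.Adj v w ∧ f w = 3) ∨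
    (∃ w₁ w₂, G.Adj v w₁ ∧ G.Adj v w₂ ∧ w₁ ≠ w₂ ∧ f w₁ = 2 ∧ f w₂ = 2)) ∧
  (∀ v, f v = 1 → ∃ w, G.Adj v w ∧ 2 ≤ f w)

/-- The double Roman domination number `γ_dR(G)`: the minimum weight of a DRDF on `G`. -/
noncomputable def gammaDR {V : Type*} [Fintype V] (G : SimpleGraph V) : ℕ :=
  sInf {k | ∃ f : V → ℕ, IsDRDF G f ∧ ∑ v, f v = k}

/-- The double Roman bondage number `b_dR(G)`: the minimum cardinality of a set
`B` of edges of `G` such that `γ_dR(G - B) > γ_dR(G)`. -/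
noncomputable def bDR {V : Type*} [Fintype V] (G : SimpleGraph V) : ℕ :=
  sInf {k | ∃ B : Finset (Sym2 V), ↑B ⊆ G.edgeSet ∧ B.card = k ∧
    gammaDR G < gammaDR (G.deleteEdges ↑B)}

/-!
Take a vertex `v` of minimum degree and a neighbour `u` of it, and delete the
`deg u + deg v - 1 ≤ δ + Δ - 1` edges at `u` or `v`. In the new graph `u` and `v` are isolated,
so every DRDF gives them at least `2` each; reassigning `u ↦ 0`, `v ↦ 3` gives a DRDF of `G` that
is lighter by at least `1`. Hence `b_dR(G) ≤ δ + Δ - 1`, and a connected graph on at least three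
vertices has `Δ ≥ 2`.
-/

open Finset Function

namespace SimpleGraph

variable {V : Type*}

theorem Connected.two_le_maxDegree [Fintype V] {G : SimpleGraph V} [DecidableRel G.Adj]
    (hconn : G.Connected) (hV : 3 ≤ Fintype.card V) : 2 ≤ G.maxDegree := by
  by_contra! hΔ
  -- `n - 1 ≤ |E| = (∑ deg) / 2 ≤ n / 2` forces `n ≤ 2`.
  have hsum : ∑ v, G.degree v ≤ Fintype.card V :=
    calc ∑ v, G.degree v ≤ ∑ _ : V, 1 := sum_le_sum fun v _ ↦ by
          have := G.degree_le_maxDegree v; omega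
      _ = Fintype.card V := by simp
  have htree := hconn.card_vert_le_card_edgeSet_add_one
  rw [Nat.card_eq_fintype_card, Nat.card_eq_fintype_card, ← edgeFinset_card] at htree
  have := G.sum_degrees_eq_twice_card_edges
  omega

theorem not_adj_deleteEdges_of_incidenceSet_subset {G : SimpleGraph V} {s : Set (Sym2 V)}
    {u : V} (hs : G.incidenceSet u ⊆ s) (w : V) : ¬(G.deleteEdges s).Adj u w := fun hadj ↦
  ((deleteEdges_adj ..).mp hadj).2 (hs (G.mk'_mem_incidenceSet_left_iff.mpr hadj.1))

theorem card_incidenceFinset_union_lt [Fintype V] [DecidableEq V] {G : SimpleGraph V}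
    [DecidableRel G.Adj] {u v : V} (huv : G.Adj u v) :
    #(G.incidenceFinset u ∪ G.incidenceFinset v) < G.degree u + G.degree v := by
  have hshared : s(u, v) ∈ G.incidenceFinset u ∩ G.incidenceFinset v := by
    simp only [mem_inter, mem_incidenceFinset]
    exact ⟨G.mk'_mem_incidenceSet_left_iff.mpr huv, G.mk'_mem_incidenceSet_right_iff.mpr huv⟩
  have := card_union_add_card_inter (G.incidenceFinset u) (G.incidenceFinset v)
  have := card_pos.mpr ⟨_, hshared⟩
  rw [card_incidenceFinset_eq_degree, card_incidenceFinset_eq_degree] at *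
  omega

end SimpleGraph

theorem Fintype.sum_update_add {ι M : Type*} [Fintype ι] [DecidableEq ι] [AddCommMonoid M]
    (f : ι → M) (i : ι) (b : M) : ∑ x, update f i b x + f i = ∑ x, f x + b := by
  rw [sum_update_of_mem (mem_univ i), ← add_sum_erase univ f (mem_univ i),
    sdiff_singleton_eq_erase]
  abel

section DoubleRoman

variable {V : Type*} {G H : SimpleGraph V} {f : V → ℕ}

theorem isDRDF_const_two (G : SimpleGraph V) : IsDRDF G fun _ ↦ 2 :=
  ⟨fun _ ↦ by norm_num, fun _ h ↦ absurd h (by norm_num), fun _ h ↦ absurd h (by norm_num)⟩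

theorem IsDRDF.two_le_of_forall_not_adj (hf : IsDRDF G f) {v : V} (hv : ∀ w, ¬G.Adj v w) :
    2 ≤ f v := by
  obtain ⟨-, hzero, hone⟩ := hf
  by_contra! hlt
  obtain h0 | h1 : f v = 0 ∨ f v = 1 := by omega
  · rcases hzero v h0 with ⟨w, hw, -⟩ | ⟨w, -, hw, -⟩ <;> exact hv w hw
  · obtain ⟨w, hw, -⟩ := hone v h1
    exact hv w hw

theorem IsDRDF.update_update_of_isolated [DecidableEq V] (hf : IsDRDF H f) (hHG : H ≤ G)
    {u v : V} (huv : G.Adj u v) (hu : ∀ w, ¬H.Adj u w) (hv : ∀ w, ¬H.Adj v w) :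
    IsDRDF G (update (update f v 3) u 0) := by
  obtain ⟨hle, hzero, hone⟩ := hf
  set g := update (update f v 3) u 0
  have hgu : g u = 0 := update_self ..
  have hgv : g v = 3 := by simp [g, update_of_ne huv.ne.symm]
  have hg : ∀ x, x ≠ u → x ≠ v → g x = f x := fun x hxu hxv ↦ by
    simp [g, update_of_ne hxu, update_of_ne hxv]
  have hgH : ∀ {x w}, H.Adj x w → g w = f w := fun {x w} hxw ↦
    hg w (by rintro rfl; exact hu x hxw.symm) (by rintro rfl; exact hv x hxw.symm)
  refine ⟨fun x ↦ ?_, fun x hx ↦ ?_, fun x hx ↦ ?_⟩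
  · by_cases hxu : x = u
    · simp [hxu, hgu]
    by_cases hxv : x = v
    · simp [hxv, hgv]
    rw [hg x hxu hxv]
    exact hle x
  · by_cases hxu : x = u
    · exact .inl ⟨v, hxu ▸ huv, hgv⟩
    have hxv : x ≠ v := by rintro rfl; omega
    rw [hg x hxu hxv] at hx
    rcases hzero x hx with ⟨w, hw, h3⟩ | ⟨w₁, w₂, hw₁, hw₂, hne, h₁, h₂⟩
    · exact .inl ⟨w, hHG hw, hgH hw ▸ h3⟩
    · exact .inr ⟨w₁, w₂, hHG hw₁, hHG hw₂, hne, hgH hw₁ ▸ h₁, hgH hw₂ ▸ h₂⟩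
  · have hxu : x ≠ u := by rintro rfl; omega
    have hxv : x ≠ v := by rintro rfl; omega
    rw [hg x hxu hxv] at hx
    obtain ⟨w, hw, h2⟩ := hone x hx
    exact ⟨w, hHG hw, hgH hw ▸ h2⟩

variable [Fintype V]

theorem gammaDR_le_sum (hf : IsDRDF G f) : gammaDR G ≤ ∑ v, f v :=
  Nat.sInf_le ⟨f, hf, rfl⟩

theorem exists_isDRDF_sum_eq_gammaDR (G : SimpleGraph V) :
    ∃ f, IsDRDF G f ∧ ∑ v, f v = gammaDR G :=
  Nat.sInf_mem (s := {k | ∃ f : V → ℕ, IsDRDF G f ∧ ∑ v, f v = k})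
    ⟨_, _, isDRDF_const_two G, rfl⟩

theorem gammaDR_lt_of_isolated (hHG : H ≤ G) {u v : V} (huv : G.Adj u v)
    (hu : ∀ w, ¬H.Adj u w) (hv : ∀ w, ¬H.Adj v w) : gammaDR G < gammaDR H := by
  classical
  obtain ⟨f, hf, hsum⟩ := exists_isDRDF_sum_eq_gammaDR H
  have hfu := hf.two_le_of_forall_not_adj hu
  have hfv := hf.two_le_of_forall_not_adj hv
  have hG := gammaDR_le_sum (hf.update_update_of_isolated hHG huv hu hv)
  have hstep₁ := Fintype.sum_update_add (update f v 3) u 0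
  have hstep₂ := Fintype.sum_update_add f v 3
  rw [update_of_ne huv.ne] at hstep₁
  omega

theorem bDR_le_card (B : Finset (Sym2 V)) (hB : ↑B ⊆ G.edgeSet)
    (hlt : gammaDR G < gammaDR (G.deleteEdges ↑B)) : bDR G ≤ #B :=
  Nat.sInf_le ⟨B, hB, rfl, hlt⟩

theorem bDR_lt_degree_add_degree [DecidableRel G.Adj] {u v : V} (huv : G.Adj u v) :
    bDR G < G.degree u + G.degree v := by
  classical
  set B := G.incidenceFinset u ∪ G.incidenceFinset v
  have hB : (↑B : Set (Sym2 V)) = G.incidenceSet u ∪ G.incidenceSet v := by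
    simp only [B, coe_union, SimpleGraph.coe_incidenceFinset]
  have hBsub : ↑B ⊆ G.edgeSet := by
    rw [hB]
    exact Set.union_subset (G.incidenceSet_subset u) (G.incidenceSet_subset v)
  have hlt : gammaDR G < gammaDR (G.deleteEdges ↑B) := by
    rw [hB]
    exact gammaDR_lt_of_isolated (G.deleteEdges_le _) huv
      (G.not_adj_deleteEdges_of_incidenceSet_subset Set.subset_union_left)
      (G.not_adj_deleteEdges_of_incidenceSet_subset Set.subset_union_right)
  exact (bDR_le_card B hBsub hlt).trans_lt (G.card_incidenceFinset_union_lt huv)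

end DoubleRoman

/-- If `G` is a connected graph of order `n ≥ 3`, then
`b_dR(G) ≤ δ(G) + 2Δ(G) − 3`. -/
theorem bDR_le_minDegree_add_two_maxDegree {V : Type*} [Fintype V]
    (G : SimpleGraph V) [DecidableRel G.Adj]
    (hconn : G.Connected) (hn : 3 ≤ Fintype.card V) :
    (bDR G : ℤ) ≤ (G.minDegree : ℤ) + 2 * G.maxDegree - 3 := by
  have : Nontrivial V := Fintype.one_lt_card_iff_nontrivial.mp (by omega)
  obtain ⟨v, hv⟩ := G.exists_minimal_degree_vertex
  obtain ⟨u, hvu⟩ :=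
    (G.degree_pos_iff_exists_adj v).mp (hconn.preconnected.degree_pos_of_nontrivial v)
  have hb := bDR_lt_degree_add_degree hvu
  have hΔ := hconn.two_le_maxDegree hn
  have hu := G.degree_le_maxDegree u
  omega
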